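/- Let G be a multigraph and S, R two roots of G with S = R in the graph monoid M(G). Then there exist a finite basis B_S of a cofinite inescapable subspace of T(G, S), a finite basis B_R of a cofinite inescapable subspace of T(G, R), and a bijection π : B_S → B_R such that T(p) = T(π(p)) for every p ∈ B_S. -/

import Mathlib

/-- A directed multigraph: vertices, edges, origin and terminus maps. -/
structure Multigraph where
  V : Type
  E : Type
  o : E → V
  t : E → V

namespace Multigraph

/-- Graph homomorphism. -/
structure Hom (G H : Multigraph) where
  onV : G.V → H.V
  onE : G.E → H.E
  map_o : ∀ e, H.o (onE e) = onV (G.o e)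
  map_t : ∀ e, H.t (onE e) = onV (G.t e)

/-- Graph isomorphism. -/
structure Iso (G H : Multigraph) extends Hom G H where
  bijV : Function.Bijective onV
  bijE : Function.Bijective onE

/-- Rooted isomorphism of rooted multigraphs. -/
def RootedIso (G : Multigraph) (S : G.V) (H : Multigraph) (R : H.V) : Prop :=
  ∃ φ : Iso G H, φ.onV S = R

/-- Outgoing edge neighbourhood of a vertex. -/
def Eo (G : Multigraph) (v : G.V) : Set G.E := {e | G.o e = v}

/-- Incoming edge neighbourhood of a vertex. -/
def Et (G : Multigraph) (v : G.V) : Set G.E := {e | G.t e = v}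

/-- A graph equivalence relation: compatible equivalences on vertices and edges. -/
structure GraphEquiv (G : Multigraph) where
  rV : G.V → G.V → Prop
  rE : G.E → G.E → Prop
  equivV : Equivalence rV
  equivE : Equivalence rE
  compat_o : ∀ e f, rE e f → rV (G.o e) (G.o f)
  compat_t : ∀ e f, rE e f → rV (G.t e) (G.t f)

/-- Non-edge-collapsing graph equivalence relation. -/
def GraphEquiv.NonEdgeCollapsing {G : Multigraph} (s : GraphEquiv G) : Prop :=
  ∀ v v', s.rV v v' → ∀ e, G.o e = v → ∃! e', G.o e' = v' ∧ s.rE e e'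

/-- Quotient graph by a graph equivalence relation. -/
def GraphEquiv.quot {G : Multigraph} (s : GraphEquiv G) : Multigraph where
  V := Quot s.rV
  E := Quot s.rE
  o := Quot.lift (fun e => Quot.mk s.rV (G.o e)) (fun e f h => Quot.sound (s.compat_o e f h))
  t := Quot.lift (fun e => Quot.mk s.rV (G.t e)) (fun e f h => Quot.sound (s.compat_t e f h))

/-- A graph is non-redundant if its only non-edge-collapsing equivalence relation is trivial. -/
def NonRedundant (G : Multigraph) : Prop :=
  ∀ s : GraphEquiv G, s.NonEdgeCollapsing →
    (∀ v w, s.rV v w → v = w) ∧ (∀ e f, s.rE e f → e = f)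

/-- Directed walks in `G` starting at `S`, indexed by the terminus. -/
inductive Walk (G : Multigraph) (S : G.V) : G.V → Type
  | nil : Walk G S S
  | snoc {v : G.V} (w : Walk G S v) (e : G.E) (h : G.o e = v) : Walk G S (G.t e)

/-- Length of a walk. -/
def Walk.length {G : Multigraph} {S : G.V} : ∀ {v : G.V}, Walk G S v → ℕ
  | _, .nil => 0
  | _, .snoc w _ _ => w.length + 1

/-- Reachability by a directed walk. -/
def Reaches (G : Multigraph) (x y : G.V) : Prop := Nonempty (Walk G x y)

/-- `S` is a root: every vertex is reachable from `S`. -/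
def IsRoot (G : Multigraph) (S : G.V) : Prop := ∀ v, Reaches G S v

/-- No two edges share a terminus. -/
def NoClashes (G : Multigraph) : Prop := ∀ e f : G.E, G.t e = G.t f → e = f

/-- No non-empty closed walks. -/
def Acyclic (G : Multigraph) : Prop := ∀ v : G.V, ∀ w : Walk G v v, w.length = 0

/-- The outgoing subgraph `G_x`: induced on the vertices reachable from `x`. -/
def outGraph (G : Multigraph) (x : G.V) : Multigraph where
  V := {y : G.V // Reaches G x y}
  E := {e : G.E // Reaches G x (G.o e)}
  o := fun e => ⟨G.o e.1, e.2⟩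
  t := fun e => ⟨G.t e.1, e.2.elim fun w => ⟨w.snoc e.1 rfl⟩⟩

/-- The natural root of `G_x`. -/
def rootOut (G : Multigraph) (x : G.V) : (outGraph G x).V := ⟨x, ⟨Walk.nil⟩⟩

/-- o-equivalence of vertices: rooted isomorphism of their outgoing graphs. -/
def OEquiv (G : Multigraph) (v w : G.V) : Prop :=
  RootedIso (outGraph G v) (rootOut G v) (outGraph G w) (rootOut G w)

/-- Walks starting at `S` (with arbitrary terminus). -/
abbrev WalkFrom (G : Multigraph) (S : G.V) : Type := Σ v : G.V, Walk G S v

/-- Terminus of a walk. -/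
def term {G : Multigraph} {S : G.V} (w : WalkFrom G S) : G.V := w.1

/-- The unfolding tree `T(G, S)`: vertices are walks from `S`, edges are one-step extensions. -/
def unfoldTree (G : Multigraph) (S : G.V) : Multigraph where
  V := WalkFrom G S
  E := Σ v : G.V, Walk G S v × {e : G.E // G.o e = v}
  o := fun x => ⟨x.1, x.2.1⟩
  t := fun x => ⟨G.t x.2.2.1, x.2.1.snoc x.2.2.1 x.2.2.2⟩

/-- The empty walk at `S`, root of the unfolding tree. -/
def nilWalk (G : Multigraph) (S : G.V) : WalkFrom G S := ⟨S, Walk.nil⟩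

/-- Prefix order on walks from `S`. -/
inductive IsPrefix (G : Multigraph) (S : G.V) : WalkFrom G S → WalkFrom G S → Prop
  | refl (w : WalkFrom G S) : IsPrefix G S w w
  | snoc {w : WalkFrom G S} {v : G.V} (u : Walk G S v) (e : G.E) (h : G.o e = v) :
      IsPrefix G S w ⟨v, u⟩ → IsPrefix G S w ⟨G.t e, u.snoc e h⟩

/-- The half-tree of the unfolding tree rooted at the walk `w`. -/
def halfTree (G : Multigraph) (S : G.V) (w : WalkFrom G S) : Multigraph where
  V := {u : WalkFrom G S // IsPrefix G S w u}
  E := {x : Σ v : G.V, Walk G S v × {e : G.E // G.o e = v} // IsPrefix G S w ⟨x.1, x.2.1⟩}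
  o := fun x => ⟨⟨x.1.1, x.1.2.1⟩, x.2⟩
  t := fun x => ⟨⟨G.t x.1.2.2.1, x.1.2.1.snoc x.1.2.2.1 x.1.2.2.2⟩,
    IsPrefix.snoc x.1.2.1 x.1.2.2.1 x.1.2.2.2 x.2⟩

/-- A subspace of the unfolding tree: a set of walks closed under extension. -/
def IsSubspace (G : Multigraph) (S : G.V) (𝒮 : Set (WalkFrom G S)) : Prop :=
  ∀ w ∈ 𝒮, ∀ w', IsPrefix G S w w' → w' ∈ 𝒮

/-- An inescapable subspace: every walk extends into it. -/
def Inescapable (G : Multigraph) (S : G.V) (𝒮 : Set (WalkFrom G S)) : Prop :=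
  ∀ w : WalkFrom G S, ∃ u ∈ 𝒮, IsPrefix G S w u

/-- A cofinite subspace: a finite union of half-trees. -/
def CofiniteSubspace (G : Multigraph) (S : G.V) (𝒮 : Set (WalkFrom G S)) : Prop :=
  ∃ F : Set (WalkFrom G S), F.Finite ∧ 𝒮 = {u | ∃ x ∈ F, IsPrefix G S x u}

/-- `B` is a basis of the subspace `𝒮`: a prefix-antichain in `𝒮` such that every
walk in `𝒮` has a prefix in `B`. -/
def IsBasis (G : Multigraph) (S : G.V) (𝒮 B : Set (WalkFrom G S)) : Prop :=
  B ⊆ 𝒮 ∧ (∀ b ∈ B, ∀ b' ∈ B, IsPrefix G S b b' → b = b') ∧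
    ∀ w ∈ 𝒮, ∃ b ∈ B, IsPrefix G S b w

/-- Deleting a set of edges from a graph (also removing vertices all of whose
incident edges are deleted). -/
def deleteEdges (G : Multigraph) (F : Set G.E) : Multigraph where
  V := {v : G.V // ¬((∃ e, G.o e = v ∨ G.t e = v) ∧ ∀ e, (G.o e = v ∨ G.t e = v) → e ∈ F)}
  E := {e : G.E // e ∉ F}
  o := fun e => ⟨G.o e.1, fun h => e.2 (h.2 e.1 (Or.inl rfl))⟩
  t := fun e => ⟨G.t e.1, fun h => e.2 (h.2 e.1 (Or.inr rfl))⟩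

/-- Two trees are almost isomorphic: after removing finite subtrees (given by their
finite edge sets), the remainders are isomorphic. -/
def AlmostIso (T1 T2 : Multigraph) : Prop :=
  ∃ F1 : Set T1.E, F1.Finite ∧ ∃ F2 : Set T2.E, F2.Finite ∧
    Nonempty (Iso (deleteEdges T1 F1) (deleteEdges T2 F2))

open scoped Classical in
/-- The multiset of termini of the outgoing edges of `v`. -/
noncomputable def outSum (G : Multigraph) [Fintype G.E] (v : G.V) : Multiset G.V :=
  ∑ e ∈ Finset.univ.filter (fun e => G.o e = v), ({G.t e} : Multiset G.V)

/-- The defining relations of the graph monoid: `v = Σ_{e ∈ E_o(v)} t(e)` for non-sinks. -/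
def monoidRel (G : Multigraph) [Fintype G.E] : Multiset G.V → Multiset G.V → Prop :=
  fun s u => ∃ v : G.V, (∃ e, G.o e = v) ∧ s = {v} ∧ u = outSum G v

/-- Equality in the graph monoid `M(G)`: the additive congruence generated by the
graph relations on the free commutative monoid `Multiset G.V`. -/
def monoidEq (G : Multigraph) [Fintype G.E] (s u : Multiset G.V) : Prop :=
  addConGen (monoidRel G) s u

/-- A robustly rooted graph: it has a root, and every root has an out-neighbour that
is again a root. -/
def RobustlyRooted (G : Multigraph) : Prop :=
  (∃ S, IsRoot G S) ∧ ∀ v, IsRoot G v → ∃ e, G.o e = v ∧ IsRoot G (G.t e)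

/-- The two-vertex multigraph with adjacency matrix `(A B; C D)`;
`false` is the vertex `x`, `true` is the vertex `y`. -/
def twoVertexGraph (A B C D : ℕ) : Multigraph where
  V := Bool
  E := (Fin A ⊕ Fin B) ⊕ (Fin C ⊕ Fin D)
  o := fun e => match e with | .inl _ => false | .inr _ => true
  t := fun e => match e with
    | .inl (.inl _) => false
    | .inl (.inr _) => true
    | .inr (.inl _) => false
    | .inr (.inr _) => true

instance (A B C D : ℕ) : Fintype (twoVertexGraph A B C D).E :=
  inferInstanceAs (Fintype ((Fin A ⊕ Fin B) ⊕ (Fin C ⊕ Fin D)))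

end Multigraph

/-!
Read the defining relations of `M(G)` as a rewriting system on multisets of vertices, in which
a step expands one occurrence of a non-sink `v` into `Σ_{e ∈ E_o(v)} t(e)`. Two different steps
from the same multiset commute, so the system is confluent, and `S = R` in `M(G)` means that
`{S}` and `{R}` rewrite to a common multiset `m`. Along a rewriting sequence starting at `{S}`
one maintains a finite front of `T(G, S)` (a prefix-antichain to which every walk is comparable)
whose multiset of termini is the current multiset: expanding `v` replaces a walk ending at `v`
by its one-edge extensions. A finite front is a basis of the cofinite inescapable subspace it
generates, and two fronts with the same multiset `m` of termini are in terminus-preserving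
bijection.
-/

theorem exists_equiv_of_map_univ_val_eq {α β γ : Type*} [Fintype α] [Fintype β]
    (f : α → γ) (g : β → γ)
    (h : (Finset.univ : Finset α).val.map f = (Finset.univ : Finset β).val.map g) :
    ∃ e : α ≃ β, ∀ a, g (e a) = f a := by
  classical
  have hfiber (c : γ) : Fintype.card {a // f a = c} = Fintype.card {b // g b = c} := by
    have hcount := congrArg (Multiset.count c) h
    simp only [Multiset.count_map, @eq_comm _ c] at hcount
    rw [Fintype.card_subtype, Fintype.card_subtype]
    exact hcount
  refine ⟨(Equiv.sigmaFiberEquiv f).symm.trans <|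
    (Equiv.sigmaCongrRight fun c => Fintype.equivOfCardEq (hfiber c)).trans
      (Equiv.sigmaFiberEquiv g), fun a => ?_⟩
  exact (Fintype.equivOfCardEq (hfiber (f a)) ⟨a, rfl⟩).2

namespace Multigraph

section Prefix

variable {G : Multigraph} {S : G.V}

theorem IsPrefix.trans {a b c : WalkFrom G S} (hab : IsPrefix G S a b)
    (hbc : IsPrefix G S b c) : IsPrefix G S a c := by
  induction hbc with
  | refl => exact hab
  | snoc u e h _ ih => exact .snoc u e h ih

theorem nilWalk_isPrefix (w : WalkFrom G S) : IsPrefix G S (nilWalk G S) w := by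
  obtain ⟨v, w⟩ := w
  induction w with
  | nil => exact .refl _
  | snoc u e h ih => exact .snoc _ e h ih

theorem isPrefix_snoc_self (b : WalkFrom G S) (e : G.E) (h : G.o e = b.1) :
    IsPrefix G S b ⟨G.t e, b.2.snoc e h⟩ :=
  .snoc b.2 e h (.refl b)

theorem IsPrefix.length_le {a b : WalkFrom G S} (h : IsPrefix G S a b) :
    a.2.length ≤ b.2.length := by
  induction h with
  | refl => exact le_rfl
  | snoc u e h _ ih => exact ih.trans (Nat.le_succ _)

theorem IsPrefix.eq_of_length_le {a b : WalkFrom G S} (h : IsPrefix G S a b)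
    (hlen : b.2.length ≤ a.2.length) : a = b := by
  cases h with
  | refl => rfl
  | snoc u e h hu =>
    have := hu.length_le
    dsimp only at this
    simp only [Walk.length] at hlen
    omega

-- Lets `snoc_inj` avoid dependent elimination on the terminus index.
def WalkFrom.unsnoc : WalkFrom G S → Option (WalkFrom G S × G.E)
  | ⟨_, .nil⟩ => none
  | ⟨_, .snoc u e _⟩ => some (⟨_, u⟩, e)

theorem WalkFrom.snoc_inj {x x' : WalkFrom G S} {e e' : G.E} {h : G.o e = x.1}
    {h' : G.o e' = x'.1}
    (hxx' : (⟨G.t e, x.2.snoc e h⟩ : WalkFrom G S) = ⟨G.t e', x'.2.snoc e' h'⟩) :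
    x = x' ∧ e = e' := by
  simpa [unsnoc] using congrArg unsnoc hxx'

theorem isPrefix_snoc_iff {c x : WalkFrom G S} {e : G.E} {h : G.o e = x.1} :
    IsPrefix G S c ⟨G.t e, x.2.snoc e h⟩ ↔
      c = ⟨G.t e, x.2.snoc e h⟩ ∨ IsPrefix G S c x := by
  refine ⟨fun hc => ?_, ?_⟩
  · generalize hy : (⟨G.t e, x.2.snoc e h⟩ : WalkFrom G S) = y at hc
    cases hc with
    | refl => exact .inl rfl
    | snoc u e' h' hu =>
      obtain ⟨rfl, rfl⟩ := WalkFrom.snoc_inj (x' := ⟨_, u⟩) hy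
      exact .inr hu
  · rintro (rfl | hc)
    · exact .refl _
    · exact .snoc x.2 e h hc

theorem IsPrefix.exists_snoc_of_ne {b w : WalkFrom G S} (hbw : IsPrefix G S b w) (hne : b ≠ w) :
    ∃ (e : G.E) (h : G.o e = b.1), IsPrefix G S ⟨G.t e, b.2.snoc e h⟩ w := by
  induction hbw with
  | refl => exact absurd rfl hne
  | @snoc v u e h hbu ih =>
    by_cases hb : b = ⟨v, u⟩
    · subst hb
      exact ⟨e, h, .refl _⟩
    · obtain ⟨e', h', hu⟩ := ih hb
      exact ⟨e', h', .snoc u e h hu⟩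

end Prefix

section GraphMonoid

open Relation

variable (G : Multigraph) [Fintype G.E]

def ExpandStep (s u : Multiset G.V) : Prop :=
  ∃ (v : G.V) (t : Multiset G.V), (∃ e, G.o e = v) ∧ s = v ::ₘ t ∧ u = outSum G v + t

variable {G}

open scoped Classical in
theorem outSum_eq_map (v : G.V) :
    outSum G v = (Finset.univ.filter (G.o · = v)).val.map G.t := by
  have := Multiset.sum_map_singleton ((Finset.univ.filter (G.o · = v)).val.map G.t)
  rw [Multiset.map_map] at this
  rwa [outSum, Finset.sum_eq_multiset_sum]

theorem ExpandStep.add_right {s u : Multiset G.V} (h : ExpandStep G s u) (t : Multiset G.V) :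
    ExpandStep G (s + t) (u + t) := by
  obtain ⟨v, t', hv, rfl, rfl⟩ := h
  exact ⟨v, t' + t, hv, Multiset.cons_add _ _ _, add_assoc _ _ _⟩

theorem reflTransGen_expandStep_add_right {s u : Multiset G.V}
    (h : ReflTransGen (ExpandStep G) s u) (t : Multiset G.V) :
    ReflTransGen (ExpandStep G) (s + t) (u + t) := by
  induction h with
  | refl => exact .refl
  | tail _ hstep ih => exact ih.tail (hstep.add_right t)

theorem reflTransGen_expandStep_add {s u s' u' : Multiset G.V}
    (h : ReflTransGen (ExpandStep G) s u) (h' : ReflTransGen (ExpandStep G) s' u') :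
    ReflTransGen (ExpandStep G) (s + s') (u + u') :=
  (reflTransGen_expandStep_add_right h s').trans <| by
    simpa only [add_comm u] using reflTransGen_expandStep_add_right h' u

theorem expandStep_diamond {a b c : Multiset G.V} (hab : ExpandStep G a b)
    (hac : ExpandStep G a c) :
    ∃ d, ReflGen (ExpandStep G) b d ∧ ReflTransGen (ExpandStep G) c d := by
  obtain ⟨v, t, hv, rfl, rfl⟩ := hab
  obtain ⟨v', t', hv', hvt, rfl⟩ := hac
  rcases Multiset.cons_eq_cons.mp hvt with ⟨rfl, rfl⟩ | ⟨-, r, rfl, rfl⟩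
  · exact ⟨_, .refl, .refl⟩
  · refine ⟨outSum G v + (outSum G v' + r), .single ?_, .single ?_⟩
    · exact ⟨v', outSum G v + r, hv', Multiset.add_cons _ _ _, add_left_comm _ _ _⟩
    · exact ⟨v, outSum G v' + r, hv, Multiset.add_cons _ _ _, rfl⟩

def expandJoinCon : AddCon (Multiset G.V) where
  r := Join (ReflTransGen (ExpandStep G))
  iseqv := equivalence_join_reflTransGen fun _ _ _ => expandStep_diamond
  add' := fun ⟨x, hax, hbx⟩ ⟨y, hcy, hdy⟩ =>
    ⟨x + y, reflTransGen_expandStep_add hax hcy, reflTransGen_expandStep_add hbx hdy⟩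

theorem join_of_monoidEq {s u : Multiset G.V} (h : monoidEq G s u) :
    Join (ReflTransGen (ExpandStep G)) s u := by
  refine (AddCon.addConGen_le (c := expandJoinCon)).mpr ?_ h
  rintro _ _ ⟨v, hv, rfl, rfl⟩
  exact ⟨outSum G v, .single ⟨v, 0, hv, rfl, (add_zero _).symm⟩, .refl⟩

end GraphMonoid

section Front

variable {G : Multigraph} {S : G.V}

variable (G S) in
def IsFront (B : Set (WalkFrom G S)) : Prop :=
  IsAntichain (IsPrefix G S) B ∧ ∀ w, ∃ b ∈ B, IsPrefix G S b w ∨ IsPrefix G S w b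

theorem isFront_nilWalk : IsFront G S {nilWalk G S} :=
  ⟨Set.subsingleton_singleton.isAntichain _,
    fun w => ⟨_, rfl, .inl (nilWalk_isPrefix w)⟩⟩

theorem IsFront.isBasis {B : Set (WalkFrom G S)} (hB : IsFront G S B) (hfin : B.Finite) :
    ∃ 𝒮 : Set (WalkFrom G S), IsSubspace G S 𝒮 ∧ Inescapable G S 𝒮 ∧
      CofiniteSubspace G S 𝒮 ∧ IsBasis G S 𝒮 B := by
  refine ⟨{u | ∃ x ∈ B, IsPrefix G S x u}, ?_, ?_, ⟨B, hfin, rfl⟩, ?_, ?_, ?_⟩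
  · rintro w ⟨x, hx, hxw⟩ w' hww'
    exact ⟨x, hx, hxw.trans hww'⟩
  · intro w
    obtain ⟨b, hb, hbw | hwb⟩ := hB.2 w
    · exact ⟨w, ⟨b, hb, hbw⟩, .refl w⟩
    · exact ⟨b, ⟨b, hb, .refl b⟩, hwb⟩
  · exact fun b hb => ⟨b, hb, .refl b⟩
  · exact fun b hb b' hb' => hB.1.eq hb hb'
  · exact fun w hw => hw

variable [Fintype G.E]

open scoped Classical in
noncomputable def children (b : WalkFrom G S) : Finset (WalkFrom G S) :=
  Finset.univ.map ⟨fun e : {e // G.o e = b.1} => ⟨G.t e, b.2.snoc e e.2⟩,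
    fun _ _ h => Subtype.ext (WalkFrom.snoc_inj h).2⟩

theorem mem_children {b c : WalkFrom G S} :
    c ∈ children b ↔ ∃ (e : G.E) (h : G.o e = b.1), c = ⟨G.t e, b.2.snoc e h⟩ := by
  simp only [children, Finset.mem_map, Finset.mem_univ, true_and]
  constructor
  · rintro ⟨⟨e, h⟩, rfl⟩
    exact ⟨e, h, rfl⟩
  · rintro ⟨e, h, rfl⟩
    exact ⟨⟨e, h⟩, rfl⟩

theorem children_map_term (b : WalkFrom G S) : (children b).val.map term = outSum G b.1 := by
  classical
  rw [outSum_eq_map, ← Finset.univ_val_map_subtype_restrict, children, Finset.map_val,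
    Multiset.map_map]
  rfl

theorem isPrefix_of_mem_children {b c : WalkFrom G S} (hc : c ∈ children b) :
    IsPrefix G S b c := by
  obtain ⟨e, h, rfl⟩ := mem_children.mp hc
  exact isPrefix_snoc_self b e h

theorem length_of_mem_children {b c : WalkFrom G S} (hc : c ∈ children b) :
    c.2.length = b.2.length + 1 := by
  obtain ⟨e, h, rfl⟩ := mem_children.mp hc
  rfl

theorem ne_of_mem_children {b c : WalkFrom G S} (hc : c ∈ children b) : c ≠ b := by
  rintro rfl
  have := length_of_mem_children hc
  omega

theorem children_nonempty {b : WalkFrom G S} (hb : ∃ e, G.o e = b.1) : (children b).Nonempty := by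
  obtain ⟨e, h⟩ := hb
  exact ⟨_, mem_children.mpr ⟨e, h, rfl⟩⟩

theorem isAntichain_children (b : WalkFrom G S) : IsAntichain (IsPrefix G S) ↑(children b) :=
  fun _ hc _ hc' hne hcc' =>
    hne (hcc'.eq_of_length_le (by rw [length_of_mem_children hc, length_of_mem_children hc']))

theorem IsFront.replace {B : Set (WalkFrom G S)} (hB : IsFront G S B) {b : WalkFrom G S}
    (hb : b ∈ B) (hsink : ∃ e, G.o e = b.1) : IsFront G S (↑(children b) ∪ (B \ {b})) := by
  obtain ⟨hanti, hcover⟩ := hB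
  refine ⟨isAntichain_union.mpr
    ⟨isAntichain_children b, hanti.subset Set.sdiff_subset, ?_⟩, ?_⟩
  · rintro c hc a ⟨ha, hab⟩ -
    have hbc := isPrefix_of_mem_children hc
    refine ⟨fun hca => hab (hanti.eq hb ha (hbc.trans hca)).symm, fun hac => ?_⟩
    obtain ⟨e, h, rfl⟩ := mem_children.mp hc
    rcases isPrefix_snoc_iff.mp hac with rfl | hab'
    · exact ne_of_mem_children hc (hanti.eq hb ha hbc).symm
    · exact hab (hanti.eq ha hb hab')
  · intro w
    obtain ⟨a, ha, hcomp⟩ := hcover w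
    by_cases hab : a = b
    · subst hab
      obtain ⟨c, hc⟩ := children_nonempty hsink
      have hac := isPrefix_of_mem_children hc
      rcases hcomp with haw | hwa
      · by_cases hw : a = w
        · exact ⟨c, .inl hc, .inr (hw ▸ hac)⟩
        · obtain ⟨e, h, hew⟩ := haw.exists_snoc_of_ne hw
          exact ⟨_, .inl (mem_children.mpr ⟨e, h, rfl⟩), .inl hew⟩
      · exact ⟨c, .inl hc, .inr (hwa.trans hac)⟩
    · exact ⟨a, .inr ⟨ha, hab⟩, hcomp⟩

theorem exists_front_of_reflTransGen {m : Multiset G.V}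
    (h : Relation.ReflTransGen (ExpandStep G) {S} m) :
    ∃ B : Finset (WalkFrom G S), IsFront G S ↑B ∧ B.val.map term = m := by
  classical
  induction h with
  | refl => exact ⟨{nilWalk G S}, by simpa using isFront_nilWalk, rfl⟩
  | tail _ hstep ih =>
    obtain ⟨B, hB, rfl⟩ := ih
    obtain ⟨v, t, hv, hBv, rfl⟩ := hstep
    obtain ⟨b, hb, rfl, rfl⟩ := (Multiset.map_eq_cons term B.val t v).mpr hBv
    have hdisj : Disjoint (children b) (B.erase b) :=
      Finset.disjoint_left.mpr fun c hc hcB => ne_of_mem_children hc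
        (hB.1.eq hb (Finset.mem_of_mem_erase hcB) (isPrefix_of_mem_children hc)).symm
    refine ⟨(children b).disjUnion (B.erase b) hdisj, ?_, ?_⟩
    · rw [Finset.coe_disjUnion, Finset.coe_erase]
      exact hB.replace hb hv
    · rw [Finset.disjUnion_val, Multiset.map_add, children_map_term, Finset.erase_val]
      rfl

end Front

end Multigraph

open Multigraph

theorem statement15_general (G : Multigraph) [Fintype G.E]
    (S R : G.V)
    (h : monoidEq G {S} {R}) :
    ∃ (BS : Finset (WalkFrom G S)) (BR : Finset (WalkFrom G R)),
      (∃ 𝒮 : Set (WalkFrom G S), IsSubspace G S 𝒮 ∧ Inescapable G S 𝒮 ∧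
        CofiniteSubspace G S 𝒮 ∧ IsBasis G S 𝒮 ↑BS) ∧
      (∃ 𝒮 : Set (WalkFrom G R), IsSubspace G R 𝒮 ∧ Inescapable G R 𝒮 ∧
        CofiniteSubspace G R 𝒮 ∧ IsBasis G R 𝒮 ↑BR) ∧
      ∃ π : {p // p ∈ BS} ≃ {q // q ∈ BR},
        ∀ p : {p // p ∈ BS}, term p.1 = term (π p).1 := by
  obtain ⟨m, hSm, hRm⟩ := join_of_monoidEq h
  obtain ⟨BS, hBS, hmS⟩ := exists_front_of_reflTransGen hSm
  obtain ⟨BR, hBR, hmR⟩ := exists_front_of_reflTransGen hRm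
  obtain ⟨π, hπ⟩ :=
    exists_equiv_of_map_univ_val_eq (fun p : BS => term p.1) (fun q : BR => term q.1)
      (by convert hmS.trans hmR.symm using 1 <;> exact Multiset.attach_map_val' _ _)
  exact ⟨BS, BR, hBS.isBasis BS.finite_toSet, hBR.isBasis BR.finite_toSet, π,
    fun p => (hπ p).symm⟩

/-- If two roots `S`, `R` are equal in the graph monoid, there are finite
bases of cofinite inescapable subspaces of `T(G,S)` and `T(G,R)` in terminus-preserving
bijection. -/
theorem statement15 (G : Multigraph) [Fintype G.E]
    (S R : G.V) (hS : IsRoot G S) (hR : IsRoot G R)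
    (h : monoidEq G {S} {R}) :
    ∃ (BS : Finset (WalkFrom G S)) (BR : Finset (WalkFrom G R)),
      (∃ 𝒮 : Set (WalkFrom G S), IsSubspace G S 𝒮 ∧ Inescapable G S 𝒮 ∧
        CofiniteSubspace G S 𝒮 ∧ IsBasis G S 𝒮 ↑BS) ∧
      (∃ 𝒮 : Set (WalkFrom G R), IsSubspace G R 𝒮 ∧ Inescapable G R 𝒮 ∧
        CofiniteSubspace G R 𝒮 ∧ IsBasis G R 𝒮 ↑BR) ∧
      ∃ π : {p // p ∈ BS} ≃ {q // q ∈ BR},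
        ∀ p : {p // p ∈ BS}, term p.1 = term (π p).1 :=
  statement15_general G S R h
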